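/- arXiv:math/0303296 — 3 statements merged into one kernel-verified Lean document; each statement's English description precedes it below -/
import Mathlib

section
/- Let $T\colon X \to X$ be an ergodic measure-preserving automorphism of a probability space $(X,\nu)$ and let $\phi\colon X \to \mathbb{R}$ be integrable with $\int \phi\, d\nu = 0$. Define $S(n,x) = \sum_{i=0}^{n-1} \phi(T^i(x))$. Then for every $\varepsilon > 0$, the set of points $x$ such that $|S(n,x)| < \varepsilon$ for infinitely many $n$ has full $\nu$-measure. -/
/-!
Suppose the set `F` of points whose Birkhoff sums satisfy `ε ≤ |S n|` for all `n ≥ k` had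
measure `δ > 0`. Along an orbit, two visits to `F` at least `k` steps apart have Birkhoff sums
differing by at least `ε`, so sorting the visits before time `N` by `⌊S n / ε⌋` shows that there
are at most `(2 M / ε + 2) k` of them, where `M = max_{n < N} |S n|`. Since on average there are
`δ N` visits, `M ≥ c N` with `c ≍ ε δ / k` on a set of measure at least `δ / 2`, for every large
`N`. This contradicts `S n = o(n)` almost everywhere, which follows from Hopf's maximal ergodic
theorem and ergodicity: for `c > 0` the sums of `φ - c` are a.e. bounded above.
-/

open MeasureTheory Filter Finset
open scoped Topology

theorem card_le_of_forall_lt_add {k : ℕ} (W : Finset ℕ)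
    (hW : ∀ p ∈ W, ∀ q ∈ W, p ≤ q → q < p + k) : #W ≤ k := by
  rcases W.eq_empty_or_nonempty with rfl | hne
  · simp
  calc #W ≤ #(Ico (W.min' hne) (W.min' hne + k)) := card_le_card fun q hq =>
        mem_Ico.2 ⟨min'_le W q hq, hW _ (min'_mem W hne) q hq (min'_le W q hq)⟩
    _ = k := by simp

theorem card_le_of_le_abs_sub {ε M : ℝ} {k : ℕ} (hε : 0 < ε) (hM : 0 ≤ M) (s : ℕ → ℝ)
    (V : Finset ℕ) (hs : ∀ n ∈ V, |s n| ≤ M)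
    (hsep : ∀ p ∈ V, ∀ q ∈ V, p + k ≤ q → ε ≤ |s q - s p|) :
    (#V : ℝ) ≤ (2 * M / ε + 2) * k := by
  set bin : ℕ → ℤ := fun n => ⌊s n / ε⌋
  have hfiber : ∀ j ∈ V.image bin, #{n ∈ V | bin n = j} ≤ k := by
    refine fun j _ => card_le_of_forall_lt_add _ fun p hp q hq hpq => ?_
    simp only [mem_filter] at hp hq
    by_contra! hkq
    have hfar := hsep p hp.1 q hq.1 hkq
    have hnear : |s q / ε - s p / ε| < 1 :=
      Int.abs_sub_lt_one_of_floor_eq_floor (hq.2.trans hp.2.symm)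
    rw [← sub_div, abs_div, abs_of_pos hε, div_lt_one hε] at hnear
    linarith
  have himage : V.image bin ⊆ Icc ⌊-(M / ε)⌋ ⌊M / ε⌋ := by
    simp only [subset_iff, mem_image, mem_Icc]
    rintro _ ⟨n, hn, rfl⟩
    have hdiv : |s n / ε| ≤ M / ε := by
      rw [abs_div, abs_of_pos hε]; exact div_le_div_of_nonneg_right (hs n hn) hε.le
    exact ⟨Int.floor_mono (abs_le.1 hdiv).1, Int.floor_mono (abs_le.1 hdiv).2⟩
  have hbins : (#(Icc ⌊-(M / ε)⌋ ⌊M / ε⌋) : ℝ) ≤ 2 * M / ε + 2 := by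
    have hle : ⌊-(M / ε)⌋ ≤ ⌊M / ε⌋ + 1 :=
      (Int.floor_mono (neg_le_self (div_nonneg hM hε.le))).trans (Int.le_add_one le_rfl)
    rw [Int.card_Icc, ← Int.cast_natCast, Int.toNat_of_nonneg (by omega)]
    push_cast
    rw [mul_div_assoc]
    linarith [Int.floor_le (M / ε), Int.lt_floor_add_one (-(M / ε))]
  calc (#V : ℝ) ≤ (k * #(V.image bin) : ℕ) := by exact_mod_cast card_le_mul_card_image V k hfiber
    _ ≤ k * #(Icc ⌊-(M / ε)⌋ ⌊M / ε⌋) := by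
      push_cast; gcongr
    _ ≤ (2 * M / ε + 2) * k := by rw [mul_comm]; gcongr

theorem eventually_forall_lt_abs_lt_mul {s : ℕ → ℝ} {c : ℝ} (hc : 0 < c)
    (h : ∀ᶠ n in atTop, |s n| < c * n) : ∀ᶠ N in atTop, ∀ n < N, |s n| < c * N := by
  obtain ⟨n₀, hn₀⟩ := eventually_atTop.1 h
  set B := ∑ n ∈ range n₀, |s n|
  filter_upwards [(tendsto_natCast_atTop_atTop.const_mul_atTop hc).eventually_gt_atTop B]
    with N hN n hn
  rcases lt_or_ge n n₀ with hlt | hge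
  · exact (single_le_sum (fun i _ => abs_nonneg (s i)) (mem_range.2 hlt)).trans_lt hN
  · exact (hn₀ n hge).trans_le (by gcongr)

section BirkhoffSum

variable {X : Type*} {f : X → X} {g : X → ℝ}

open scoped Classical in
theorem birkhoffSum_indicator_one {M : Type*} [AddCommMonoidWithOne M] (f : X → X) (F : Set X)
    (N : ℕ) (x : X) :
    birkhoffSum f (F.indicator (1 : X → M)) N x = #{n ∈ range N | f^[n] x ∈ F} := by
  simp [birkhoffSum, Set.indicator_apply, sum_boole]

theorem birkhoffSum_sub_const (f : X → X) (g : X → ℝ) (d : ℝ) (n : ℕ) (x : X) :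
    birkhoffSum f (fun y => g y - d) n x = birkhoffSum f g n x - n * d := by
  simp [birkhoffSum, sum_sub_distrib]

theorem bddAbove_range_birkhoffSum_apply_iff (x : X) :
    BddAbove (Set.range fun n => birkhoffSum f g n (f x)) ↔
      BddAbove (Set.range fun n => birkhoffSum f g n x) := by
  simp only [bddAbove_def, Set.forall_mem_range]
  constructor
  · rintro ⟨K, hK⟩
    refine ⟨max 0 (g x + K), fun n => ?_⟩
    rcases n with _ | n
    · simp
    · rw [birkhoffSum_succ']
      exact le_max_of_le_right (by linarith [hK n])
  · rintro ⟨K, hK⟩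
    refine ⟨K - g x, fun n => ?_⟩
    linarith [hK (n + 1), birkhoffSum_succ' f g n x]

open scoped Classical in
theorem card_filter_iterate_mem_le {F : Set X} {ε M : ℝ} {k N : ℕ} (hε : 0 < ε) (hM : 0 ≤ M)
    (hF : ∀ y ∈ F, ∀ n, k ≤ n → ε ≤ |birkhoffSum f g n y|) {x : X}
    (hx : ∀ n < N, |birkhoffSum f g n x| ≤ M) :
    (#{n ∈ range N | f^[n] x ∈ F} : ℝ) ≤ (2 * M / ε + 2) * k := by
  refine card_le_of_le_abs_sub hε hM (birkhoffSum f g · x) _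
    (fun n hn => hx n (mem_range.1 (mem_filter.1 hn).1)) fun p hp q _ hpq => ?_
  obtain ⟨m, rfl⟩ := Nat.exists_eq_add_of_le (le_of_add_le_left hpq)
  rw [birkhoffSum_add, add_sub_cancel_left]
  exact hF _ (mem_filter.1 hp).2 m (by omega)

noncomputable def birkhoffMax (f : X → X) (g : X → ℝ) (N : ℕ) : X → ℝ :=
  (range (N + 1)).sup' nonempty_range_add_one (birkhoffSum f g)

theorem birkhoffMax_apply (N : ℕ) (x : X) :
    birkhoffMax f g N x = (range (N + 1)).sup' nonempty_range_add_one (birkhoffSum f g · x) :=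
  Finset.sup'_apply _ _ x

theorem birkhoffSum_le_birkhoffMax {n N : ℕ} (h : n ≤ N) (x : X) :
    birkhoffSum f g n x ≤ birkhoffMax f g N x := by
  rw [birkhoffMax_apply]
  exact le_sup' (birkhoffSum f g · x) (mem_range_succ_iff.2 h)

theorem birkhoffMax_nonneg (N : ℕ) (x : X) : 0 ≤ birkhoffMax f g N x := by
  simpa using birkhoffSum_le_birkhoffMax (f := f) (g := g) (Nat.zero_le N) x

theorem monotone_birkhoffMax : Monotone (birkhoffMax f g) := fun _ _ hNM x => by
  rw [birkhoffMax_apply]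
  exact sup'_le _ _ fun n hn =>
    birkhoffSum_le_birkhoffMax ((mem_range_succ_iff.1 hn).trans hNM) x

theorem birkhoffMax_le_add_birkhoffMax_apply {N : ℕ} {x : X} (hx : 0 < birkhoffMax f g N x) :
    birkhoffMax f g N x ≤ g x + birkhoffMax f g N (f x) := by
  obtain ⟨n, hn, hmax⟩ := exists_mem_eq_sup' nonempty_range_add_one (birkhoffSum f g · x)
  rw [← birkhoffMax_apply] at hmax
  rcases n with _ | m
  · rw [hmax, birkhoffSum_zero] at hx
    exact absurd hx (lt_irrefl 0)
  · rw [hmax, birkhoffSum_succ']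
    gcongr
    exact birkhoffSum_le_birkhoffMax (by grind) _

end BirkhoffSum

theorem MeasureTheory.MeasurePreserving.integral_comp_of_aestronglyMeasurable {X Y : Type*}
    [MeasurableSpace X] [MeasurableSpace Y] {μ : Measure X} {ν : Measure Y} {f : X → Y}
    {g : Y → ℝ} (hf : MeasurePreserving f μ ν) (hg : AEStronglyMeasurable g ν) :
    ∫ x, g (f x) ∂μ = ∫ y, g y ∂ν := by
  rw [← integral_map hf.aemeasurable (hf.map_eq ▸ hg), hf.map_eq]

section Ergodic

variable {X : Type*} [MeasurableSpace X] {μ : Measure X} {f : X → X} {g : X → ℝ}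

theorem measurable_birkhoffSum (hf : Measurable f) (hg : Measurable g) (n : ℕ) :
    Measurable (birkhoffSum f g n) :=
  Finset.measurable_sum _ fun i _ => hg.comp (hf.iterate i)

theorem integrable_birkhoffSum (hf : MeasurePreserving f μ μ) (hg : Integrable g μ) (n : ℕ) :
    Integrable (birkhoffSum f g n) μ :=
  integrable_finsetSum _ fun i _ => (hf.iterate i).integrable_comp_of_integrable hg

theorem integral_birkhoffSum (hf : MeasurePreserving f μ μ) (hg : Integrable g μ) (n : ℕ) :
    ∫ x, birkhoffSum f g n x ∂μ = n * ∫ x, g x ∂μ := by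
  simp_rw [birkhoffSum]
  rw [integral_finsetSum (f := fun i x => g (f^[i] x)) _ fun i _ =>
    (hf.iterate i).integrable_comp_of_integrable hg]
  simp [(hf.iterate _).integral_comp_of_aestronglyMeasurable hg.1]

theorem integral_le_add_mul_measureReal [IsProbabilityMeasure μ] {h : X → ℝ} {A : Set X}
    {t C : ℝ} (hh : Integrable h μ) (hA : MeasurableSet A) (ht : 0 ≤ t) (hC : ∀ x, h x ≤ C)
    (hAc : ∀ x ∉ A, h x ≤ t) : ∫ x, h x ∂μ ≤ t + C * μ.real A := by
  have hbound : ∀ x, h x ≤ t + A.indicator (fun _ => C) x := fun x => by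
    by_cases hx : x ∈ A
    · rw [Set.indicator_of_mem hx]; linarith [hC x]
    · rw [Set.indicator_of_notMem hx, add_zero]; exact hAc x hx
  calc ∫ x, h x ∂μ ≤ ∫ x, t + A.indicator (fun _ => C) x ∂μ :=
        integral_mono hh ((integrable_const t).add ((integrable_const C).indicator hA)) hbound
    _ = t + C * μ.real A := by
      rw [integral_add (integrable_const t) ((integrable_const C).indicator hA),
        integral_indicator_const C hA]
      simp [mul_comm]

theorem measurable_birkhoffMax (hf : Measurable f) (hg : Measurable g) (N : ℕ) :
    Measurable (birkhoffMax f g N) :=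
  Finset.measurable_sup' _ fun n _ => measurable_birkhoffSum hf hg n

theorem integrable_birkhoffMax (hf : MeasurePreserving f μ μ) (hg : Integrable g μ) (N : ℕ) :
    Integrable (birkhoffMax f g N) μ :=
  sup'_induction _ _ (p := (Integrable · μ)) (fun _ h₁ _ h₂ => h₁.sup h₂) fun n _ =>
    integrable_birkhoffSum hf hg n

/-- Hopf's maximal ergodic theorem, in Garsia's proof: on `{0 < M}`, where `M = birkhoffMax f g N`,
one has `M ≤ g + M ∘ f`, while `M = 0` off this set and `M ∘ f ≥ 0` has the same integral as `M`. -/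
theorem setIntegral_birkhoffMax_pos_nonneg (hf : MeasurePreserving f μ μ) (hg : Measurable g)
    (hgi : Integrable g μ) (N : ℕ) : 0 ≤ ∫ x in {x | 0 < birkhoffMax f g N x}, g x ∂μ := by
  set M := birkhoffMax f g N
  set D := {x | 0 < M x}
  have hD : MeasurableSet D :=
    measurableSet_lt measurable_const (measurable_birkhoffMax hf.measurable hg N)
  have hM : Integrable M μ := integrable_birkhoffMax hf hgi N
  have hMf : Integrable (fun x => M (f x)) μ := hf.integrable_comp_of_integrable hM
  have hon : ∫ x in D, M x ∂μ = ∫ x, M x ∂μ :=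
    setIntegral_eq_integral_of_forall_compl_eq_zero fun x hx =>
      le_antisymm (not_lt.1 hx) (birkhoffMax_nonneg N x)
  have hoff : ∫ x in D, M (f x) ∂μ ≤ ∫ x, M x ∂μ :=
    (setIntegral_le_integral hMf (.of_forall fun x => birkhoffMax_nonneg N (f x))).trans_eq
      (hf.integral_comp_of_aestronglyMeasurable hM.1)
  calc 0 ≤ ∫ x in D, M x ∂μ - ∫ x in D, M (f x) ∂μ := by linarith
    _ = ∫ x in D, (M x - M (f x)) ∂μ := (integral_sub hM.integrableOn hMf.integrableOn).symm
    _ ≤ ∫ x in D, g x ∂μ := setIntegral_mono_on (hM.sub hMf).integrableOn hgi.integrableOn hD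
      fun x hx => by linarith [birkhoffMax_le_add_birkhoffMax_apply (f := f) (g := g) hx]

/-- The set where the Birkhoff sums are bounded above is invariant; if it were null, Hopf's
maximal ergodic theorem on the exhausting sets `{0 < birkhoffMax f g N}` would give `0 ≤ ∫ g`. -/
theorem Ergodic.ae_bddAbove_birkhoffSum (hf : Ergodic f μ) (hg : Measurable g)
    (hgi : Integrable g μ) (hneg : ∫ x, g x ∂μ < 0) :
    ∀ᵐ x ∂μ, BddAbove (Set.range fun n => birkhoffSum f g n x) := by
  set B := {x | BddAbove (Set.range fun n => birkhoffSum f g n x)}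
  have hB : MeasurableSet B :=
    measurableSet_bddAbove_range fun n => measurable_birkhoffSum hf.measurable hg n
  have hinv : f ⁻¹' B = B := Set.ext bddAbove_range_birkhoffSum_apply_iff
  rcases hf.ae_empty_or_univ hB hinv with hnull | hfull
  · exfalso
    set D : ℕ → Set X := fun N => {x | 0 < birkhoffMax f g N x}
    have hD : ∀ N, MeasurableSet (D N) := fun N =>
      measurableSet_lt measurable_const (measurable_birkhoffMax hf.measurable hg N)
    have hcover : (⋃ N, D N) =ᵐ[μ] Set.univ := by
      refine ae_eq_univ.2 (measure_mono_null (fun x hx => ?_) (ae_eq_empty.1 hnull))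
      by_contra hxB
      obtain ⟨_, ⟨n, rfl⟩, hn⟩ := not_bddAbove_iff.1 hxB 0
      exact hx (Set.mem_iUnion.2 ⟨n, hn.trans_le (birkhoffSum_le_birkhoffMax le_rfl x)⟩)
    have hlim := tendsto_setIntegral_of_monotone hD
      (fun N M hNM x hx => hx.trans_le (monotone_birkhoffMax hNM x)) hgi.integrableOn
    rw [setIntegral_congr_set hcover, setIntegral_univ] at hlim
    exact hneg.not_ge (ge_of_tendsto hlim (.of_forall fun N =>
      setIntegral_birkhoffMax_pos_nonneg hf.toMeasurePreserving hg hgi N))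
  · exact ae_eq_univ.1 hfull

variable [IsProbabilityMeasure μ]

theorem Ergodic.ae_eventually_abs_birkhoffSum_lt (hf : Ergodic f μ)
    (hg : Measurable g) (hgi : Integrable g μ) (hmean : ∫ x, g x ∂μ = 0) {c : ℝ} (hc : 0 < c) :
    ∀ᵐ x ∂μ, ∀ᶠ n in atTop, |birkhoffSum f g n x| < c * n := by
  have hbdd : ∀ h : X → ℝ, Measurable h → Integrable h μ → ∫ x, h x ∂μ = 0 →
      ∀ᵐ x ∂μ, BddAbove (Set.range fun n => birkhoffSum f h n x - n * (c / 2)) := by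
    intro h hm hi hint
    simp_rw [← birkhoffSum_sub_const]
    refine hf.ae_bddAbove_birkhoffSum (hm.sub measurable_const) (hi.sub (integrable_const _)) ?_
    simp [integral_sub hi (integrable_const _), hint, hc]
  filter_upwards [hbdd g hg hgi hmean, hbdd (-g) hg.neg hgi.neg (by simp [integral_neg, hmean])]
    with x ⟨K₁, hK₁⟩ ⟨K₂, hK₂⟩
  filter_upwards [(tendsto_natCast_atTop_atTop.const_mul_atTop (half_pos hc)).eventually_gt_atTop
    (max K₁ K₂)] with n hn
  have h₁ := hK₁ ⟨n, rfl⟩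
  have h₂ := hK₂ ⟨n, rfl⟩
  simp only [birkhoffSum_neg] at h₂
  rw [abs_lt]
  constructor <;> linarith [le_max_left K₁ K₂, le_max_right K₁ K₂]

theorem measurableSet_exists_lt_le_abs_birkhoffSum (hf : Measurable f) (hg : Measurable g)
    (c : ℝ) (N : ℕ) : MeasurableSet {x | ∃ n < N, c ≤ |birkhoffSum f g n x|} := by
  simp only [Set.ofPred_exists, Set.ofPred_and]
  exact .iUnion fun n => (MeasurableSet.const _).inter
    (measurableSet_le measurable_const (measurable_birkhoffSum hf hg n).abs)

theorem Ergodic.tendsto_measure_exists_lt_le_abs_birkhoffSum (hf : Ergodic f μ)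
    (hg : Measurable g) (hgi : Integrable g μ) (hmean : ∫ x, g x ∂μ = 0) {c : ℝ} (hc : 0 < c) :
    Tendsto (fun N : ℕ => μ {x | ∃ n < N, c * N ≤ |birkhoffSum f g n x|}) atTop (𝓝 0) := by
  rw [← measure_empty (μ := μ)]
  refine tendsto_measure_of_ae_tendsto_indicator_of_isFiniteMeasure _ MeasurableSet.empty
    (fun N => measurableSet_exists_lt_le_abs_birkhoffSum hf.measurable hg _ N) ?_
  filter_upwards [hf.ae_eventually_abs_birkhoffSum_lt hg hgi hmean hc] with x hx
  filter_upwards [eventually_forall_lt_abs_lt_mul hc hx] with N hN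
  simpa using fun n hn => hN n hn

/-- With `δ = μ F`, the orbit of `x` visits `F` on average `δ N` times before time `N`, but, by
`card_filter_iterate_mem_le`, at most `δ N / 2` times unless some `|S n x|` with `n < N` reaches
`c N`, where `c = ε δ / (8 (k + 1))`. -/
theorem MeasureTheory.MeasurePreserving.measureReal_exists_lt_le_abs_birkhoffSum_ge
    (hf : MeasurePreserving f μ μ) (hg : Measurable g) {ε : ℝ} (hε : 0 < ε) {k : ℕ} {F : Set X}
    (hFm : MeasurableSet F) (hF : ∀ y ∈ F, ∀ n, k ≤ n → ε ≤ |birkhoffSum f g n y|) {N : ℕ}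
    (hN : 8 * (k + 1) ≤ μ.real F * N) :
    μ.real F / 2 ≤
      μ.real {x | ∃ n < N, ε * μ.real F / (8 * (k + 1)) * N ≤ |birkhoffSum f g n x|} := by
  classical
  set δ := μ.real F
  set c := ε * δ / (8 * (k + 1))
  have hind : Integrable (F.indicator (1 : X → ℝ)) μ := (integrable_const (1 : ℝ)).indicator hFm
  have hmean : ∫ x, birkhoffSum f (F.indicator 1) N x ∂μ = N * δ := by
    rw [integral_birkhoffSum hf hind, integral_indicator_one hFm]
  have hle_N : ∀ x, birkhoffSum f (F.indicator (1 : X → ℝ)) N x ≤ N := fun x => by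
    rw [birkhoffSum_indicator_one]
    exact_mod_cast (card_filter_le _ _).trans (card_range N).le
  have hsmall : ∀ x ∉ {x | ∃ n < N, c * N ≤ |birkhoffSum f g n x|},
      birkhoffSum f (F.indicator (1 : X → ℝ)) N x ≤ δ * N / 2 := by
    intro x hx
    simp only [Set.mem_ofPred_eq, not_exists, not_and, not_le] at hx
    rw [birkhoffSum_indicator_one]
    refine (card_filter_iterate_mem_le (k := k + 1) hε (by positivity)
      (fun y hy n hn => hF y hy n (by omega)) fun n hn => (hx n hn).le).trans ?_
    have : 2 * (c * N) / ε * (k + 1) = δ * N / 4 := by simp only [c]; field_simp; ring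
    push_cast
    linarith
  have := integral_le_add_mul_measureReal (integrable_birkhoffSum hf hind N)
    (measurableSet_exists_lt_le_abs_birkhoffSum hf.measurable hg _ N) (by positivity) hle_N hsmall
  have hNpos : (0 : ℝ) < N := by
    by_contra! h
    nlinarith [measureReal_nonneg (μ := μ) (s := F)]
  nlinarith

theorem Ergodic.measure_forall_le_abs_birkhoffSum_eq_zero (hf : Ergodic f μ) (hg : Measurable g)
    (hgi : Integrable g μ) (hmean : ∫ x, g x ∂μ = 0) {ε : ℝ} (hε : 0 < ε) (k : ℕ) :
    μ {x | ∀ n, k ≤ n → ε ≤ |birkhoffSum f g n x|} = 0 := by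
  set F := {x | ∀ n, k ≤ n → ε ≤ |birkhoffSum f g n x|}
  have hFm : MeasurableSet F := by
    simp only [F, Set.ofPred_forall]
    exact .iInter fun n => .iInter fun _ =>
      measurableSet_le measurable_const (measurable_birkhoffSum hf.measurable hg n).abs
  by_contra hF0
  set δ := μ.real F
  have hδ : 0 < δ := ENNReal.toReal_pos hF0 (measure_ne_top μ F)
  have hc : 0 < ε * δ / (8 * (k + 1)) := by positivity
  have hlower : ∀ᶠ N : ℕ in atTop, ENNReal.ofReal (δ / 2) ≤
      μ {x | ∃ n < N, ε * δ / (8 * (k + 1)) * N ≤ |birkhoffSum f g n x|} := by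
    filter_upwards [(tendsto_natCast_atTop_atTop.const_mul_atTop hδ).eventually_ge_atTop
      (8 * (k + 1) : ℝ)] with N hN
    exact ENNReal.ofReal_le_of_le_toReal
      (hf.toMeasurePreserving.measureReal_exists_lt_le_abs_birkhoffSum_ge hg hε hFm
        (fun _ hy => hy) hN)
  exact (ENNReal.ofReal_pos.2 (half_pos hδ)).not_ge
    (ge_of_tendsto (hf.tendsto_measure_exists_lt_le_abs_birkhoffSum hg hgi hmean hc) hlower)

theorem Ergodic.ae_frequently_abs_birkhoffSum_lt (hf : Ergodic f μ) (hg : Integrable g μ)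
    (hmean : ∫ x, g x ∂μ = 0) {ε : ℝ} (hε : 0 < ε) :
    ∀ᵐ x ∂μ, ∃ᶠ n in atTop, |birkhoffSum f g n x| < ε := by
  obtain ⟨g₀, hg₀, hgg₀⟩ := hg.1.aemeasurable
  have hsums : ∀ᵐ x ∂μ, ∀ n, birkhoffSum f g n x = birkhoffSum f g₀ n x :=
    ae_all_iff.2 (hf.quasiMeasurePreserving.birkhoffSum_ae_eq_of_ae_eq hgg₀)
  have hnull := measure_iUnion_null (hf.measure_forall_le_abs_birkhoffSum_eq_zero hg₀
    (hg.congr hgg₀) ((integral_congr_ae hgg₀).symm.trans hmean) hε)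
  filter_upwards [hsums, measure_eq_zero_iff_ae_notMem.1 hnull] with x hsum hx
  simp only [Set.mem_iUnion, Set.mem_ofPred_eq, not_exists] at hx
  simp_rw [hsum, frequently_atTop]
  intro k
  simpa using hx k

end Ergodic

/-- **Atkinson's theorem** (Proposition): if `T` is an ergodic automorphism of a
probability space `(X, ν)` and `φ` is integrable with `∫ φ dν = 0`, then for every
`ε > 0` the set of points `x` for which the Birkhoff sums satisfy `|S(n,x)| < ε`
for infinitely many `n` has full measure. -/
theorem atkinson_small_birkhoff_sums
    {X : Type*} [MeasurableSpace X] (ν : Measure X) [IsProbabilityMeasure ν]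
    (T : X ≃ᵐ X) (hT : Ergodic (⇑T) ν)
    (φ : X → ℝ) (hφ : Integrable φ ν) (hmean : ∫ x, φ x ∂ν = 0) :
    ∀ ε > (0 : ℝ),
      ν {x : X | ∃ᶠ n in atTop, |∑ i ∈ Finset.range n, φ ((⇑T)^[i] x)| < ε} = 1 := by
  intro ε hε
  exact (measure_congr (ae_eq_univ.2 (hT.ae_frequently_abs_birkhoffSum_lt hφ hmean hε))).trans
    measure_univ
end

section
/- Let $T\colon X \to X$ be a measure-preserving automorphism of a Borel probability space $(X,\mu)$ and $\phi\colon X \to \mathbb{R}$ integrable. Let $S(n,x) = \sum_{i=0}^{n-1}\phi(T^i(x))$ and suppose the $T$-invariant set $P = \{x : \lim_{n\to\infty} S(n,x) = \infty\}$ has $\mu(P) > 0$. Then, with $\hat\phi(x) = \lim_{n\to\infty} S(n,x)/n$ (defined $\mu$-a.e.), one has $\int_P \hat\phi\, d\mu > 0$; in particular $\hat\phi(x) > 0$ on a set of positive $\mu$-measure. -/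
/-!
If the set of points where `S n x → ∞` and `S n x / n → 0` had positive measure, then moving each
such point along its orbit to the last time `n` with `S n x ≤ 0` would give, for some `ε > 0`, a set
`Z` of positive measure on which `S m ≥ ε` for all `m ≥ 1` and still `S m / m → 0`. For `δ > 0`,
`Z` is covered by the increasing sets `W` on which moreover `S m ≤ δ m` for `m ≥ N₀`. Along an
orbit the sums at successive visits to `W` increase by at least `ε`, while after `N₀` steps they
grow by at most `δ` per step, so at most `N₀ + δ N / ε + 1` of the first `N + 1` points of an orbit
lie in `W`. Integrating against the invariant measure gives `ε μ(W) ≤ δ μ(X)`, hence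
`ε μ(Z) ≤ δ μ(X)` for every `δ > 0`, a contradiction. So the Birkhoff average, nonnegative where the
sums tend to `+∞`, is a.e. positive there; by Fatou's lemma it is integrable, so its integral over
`P` is positive.
-/

open MeasureTheory Filter Finset Topology

theorem card_le_floor_div_add_one_of_separated {F : Finset ℕ} {c : ℕ → ℝ} {a L ε : ℝ}
    (hε : 0 < ε) (hc : ∀ n ∈ F, c n ∈ Set.Icc a (a + L))
    (hsep : ∀ m ∈ F, ∀ n ∈ F, m < n → c m + ε ≤ c n) :
    #F ≤ ⌊L / ε⌋₊ + 1 := by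
  set f : ℕ → ℕ := fun n => ⌊(c n - a) / ε⌋₊
  have hmaps : Set.MapsTo f F (range (⌊L / ε⌋₊ + 1)) := fun n hn => by
    have := hc n hn
    simp only [coe_range, Set.mem_Iio, Nat.lt_succ_iff, f]
    gcongr
    linarith [this.2]
  have hmono : StrictMonoOn f F := fun m hm n hn hmn => by
    have hm' := hc m hm
    have hsep' := hsep m hm n hn hmn
    calc f m < ⌊(c m - a) / ε⌋₊ + 1 := Nat.lt_succ_self _
      _ = ⌊(c m - a) / ε + 1⌋₊ := (Nat.floor_add_one (div_nonneg (by linarith [hm'.1]) hε.le)).symm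
      _ ≤ f n := by
        refine Nat.floor_le_floor ?_
        rw [div_add_one hε.ne', div_le_div_iff_of_pos_right hε]
        linarith
  simpa using card_le_card_of_injOn f hmaps hmono.injOn

theorem card_le_of_increment_bounds {G : Finset ℕ} {c : ℕ → ℝ} {ε δ : ℝ} {N₀ N : ℕ}
    (hε : 0 < ε) (hδ : 0 ≤ δ) (hG : G ⊆ range (N + 1))
    (hlow : ∀ j ∈ G, ∀ m, 1 ≤ m → c j + ε ≤ c (j + m))
    (hup : ∀ j ∈ G, ∀ m, N₀ ≤ m → c (j + m) ≤ c j + δ * m) :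
    #G ≤ N₀ + (⌊δ * N / ε⌋₊ + 1) := by
  rcases G.eq_empty_or_nonempty with rfl | hne
  · simp
  set j₁ := G.min' hne
  have hj₁ : j₁ ∈ G := G.min'_mem hne
  have hsplit : G ⊆ Ico j₁ (j₁ + N₀) ∪ G.filter (j₁ + N₀ ≤ ·) := fun n hn => by
    have : j₁ ≤ n := G.min'_le n hn
    by_cases h : j₁ + N₀ ≤ n
    · simp [hn, h]
    · simp [this, Nat.lt_of_not_le h]
  have hlate : #(G.filter (j₁ + N₀ ≤ ·)) ≤ ⌊δ * N / ε⌋₊ + 1 := by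
    refine card_le_floor_div_add_one_of_separated (c := c) (a := c j₁) hε (fun n hn => ?_) ?_
    · obtain ⟨hnG, hn⟩ := mem_filter.1 hn
      have hnN : n ≤ N := Nat.lt_succ_iff.1 (mem_range.1 (hG hnG))
      obtain ⟨m, rfl⟩ := Nat.exists_eq_add_of_le (le_trans (Nat.le_add_right _ _) hn)
      refine ⟨?_, ?_⟩
      · rcases Nat.eq_zero_or_pos m with rfl | hm
        · simp
        · linarith [hlow j₁ hj₁ m hm]
      · have : (m : ℝ) ≤ N := by exact_mod_cast (Nat.le_add_left m j₁).trans hnN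
        linarith [hup j₁ hj₁ m (by omega), mul_le_mul_of_nonneg_left this hδ]
    · intro m hm n hn hmn
      obtain ⟨k, rfl⟩ := Nat.exists_eq_add_of_lt hmn
      simpa [add_assoc] using hlow m (mem_filter.1 hm).1 (k + 1) (by omega)
  calc #G ≤ #(Ico j₁ (j₁ + N₀) ∪ G.filter (j₁ + N₀ ≤ ·)) := card_le_card hsplit
    _ ≤ #(Ico j₁ (j₁ + N₀)) + #(G.filter (j₁ + N₀ ≤ ·)) := card_union_le _ _
    _ ≤ N₀ + (⌊δ * N / ε⌋₊ + 1) := by simpa using hlate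

theorem Filter.Tendsto.exists_pos_forall_add_le {u : ℕ → ℝ} (h : Tendsto u atTop atTop) :
    ∃ n, ∃ ε > 0, ∀ m, 1 ≤ m → u n + ε ≤ u (n + m) := by
  have hfin : {k | u k ≤ u 0}.Finite := by
    simpa [← Nat.cofinite_eq_atTop] using h.eventually_gt_atTop (u 0)
  obtain ⟨n, hna, hn⟩ := Set.exists_max_image _ id hfin ⟨0, le_refl (u 0)⟩
  have hlater (k : ℕ) (hk : n < k) : u n < u k :=
    lt_of_not_ge fun hkn => (hn k (hkn.trans hna)).not_gt hk
  obtain ⟨b, hb⟩ :=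
    (Nat.cofinite_eq_atTop ▸ h.comp (tendsto_add_atTop_nat (n + 1))).exists_forall_le
  refine ⟨n, u (b + (n + 1)) - u n, sub_pos.2 (hlater _ (by omega)), fun m hm => ?_⟩
  obtain ⟨k, rfl⟩ := Nat.exists_eq_add_of_le' hm
  rw [show n + (k + 1) = k + (n + 1) by omega]
  linarith [show u (b + (n + 1)) ≤ u (k + (n + 1)) from hb k]

section BirkhoffSum

variable {X : Type*} {T : X → X}

theorem exists_iterate_forall_le_birkhoffSum {φ : X → ℝ} {x : X}
    (h : Tendsto (birkhoffSum T φ · x) atTop atTop) :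
    ∃ n, ∃ ε > 0, ∀ m, 1 ≤ m → ε ≤ birkhoffSum T φ m (T^[n] x) := by
  obtain ⟨n, ε, hε, hn⟩ := h.exists_pos_forall_add_le
  refine ⟨n, ε, hε, fun m hm => ?_⟩
  linarith [birkhoffSum_add T φ n m x, hn m hm]

theorem tendsto_birkhoffAverage_iterate_apply {φ : X → ℝ} {x : X} {l : ℝ}
    (h : Tendsto (birkhoffAverage ℝ T φ · x) atTop (𝓝 l)) (k : ℕ) :
    Tendsto (birkhoffAverage ℝ T φ · (T^[k] x)) atTop (𝓝 l) := by
  have hratio : Tendsto (fun n : ℕ => (k + n : ℝ) / n) atTop (𝓝 1) := by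
    have := (tendsto_const_div_atTop_nhds_zero_nat (k : ℝ)).const_add 1
    rw [add_zero] at this
    refine this.congr' (eventually_ne_atTop 0 |>.mono fun n hn => ?_)
    field_simp
    ring
  have hshift : Tendsto (fun n => birkhoffAverage ℝ T φ (k + n) x) atTop (𝓝 l) :=
    h.comp (tendsto_atTop_mono (fun n => Nat.le_add_left n k) tendsto_id)
  have := (hratio.mul hshift).sub (tendsto_const_div_atTop_nhds_zero_nat (birkhoffSum T φ k x))
  rw [one_mul, sub_zero] at this
  refine this.congr' (eventually_ne_atTop 0 |>.mono fun n hn => ?_)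
  have hkn : (k + n : ℝ) ≠ 0 := by positivity
  simp only [birkhoffAverage, smul_eq_mul, birkhoffSum_add]
  push_cast
  field_simp
  ring

theorem birkhoffAverage_eq_smul_sum_comp {M : Type*} [AddCommMonoid M] [Module ℝ M]
    (φ : X → M) (n : ℕ) :
    birkhoffAverage ℝ T φ n = (n : ℝ)⁻¹ • ∑ k ∈ range n, φ ∘ T^[k] := by
  ext x
  simp [birkhoffAverage, birkhoffSum]

end BirkhoffSum

section Measure

variable {X : Type*} [MeasurableSpace X] {μ : Measure X} {T : X → X}

open scoped Classical in
theorem sum_measure_le_mul_measure_univ {ι : Type*} {s : Finset ι} {A : ι → Set X}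
    (hA : ∀ i, MeasurableSet (A i)) {k : ℕ} (hk : ∀ x, #{i ∈ s | x ∈ A i} ≤ k) :
    ∑ i ∈ s, μ (A i) ≤ k * μ Set.univ := by
  calc ∑ i ∈ s, μ (A i) = ∫⁻ x, ∑ i ∈ s, (A i).indicator 1 x ∂μ := by
        rw [lintegral_finsetSum _ fun i _ => measurable_one.indicator (hA i)]
        simp only [lintegral_indicator_one (hA _)]
    _ ≤ ∫⁻ _, (k : ENNReal) ∂μ := lintegral_mono fun x => by
        simpa [Set.indicator_apply, Finset.sum_boole] using hk x
    _ = k * μ Set.univ := lintegral_const _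

theorem measurable_birkhoffSum_s1 {φ : X → ℝ} (hT : Measurable T) (hφ : Measurable φ)
    (n : ℕ) : Measurable (birkhoffSum T φ n) :=
  Finset.measurable_sum _ fun k _ => hφ.comp (hT.iterate k)

theorem mul_measureReal_le_of_birkhoffSum_bounds [IsFiniteMeasure μ] {φ : X → ℝ}
    (hT : MeasurePreserving T μ μ) {W : Set X} (hW : MeasurableSet W) {ε δ : ℝ}
    (hε : 0 < ε) (hδ : 0 ≤ δ) {N₀ : ℕ}
    (hlow : ∀ x ∈ W, ∀ m, 1 ≤ m → ε ≤ birkhoffSum T φ m x)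
    (hup : ∀ x ∈ W, ∀ m, N₀ ≤ m → birkhoffSum T φ m x ≤ δ * m) :
    ε * μ.real W ≤ δ * μ.real Set.univ := by
  classical
  have hcount (N : ℕ) (x : X) :
      #{j ∈ range (N + 1) | x ∈ T^[j] ⁻¹' W} ≤ N₀ + (⌊δ * N / ε⌋₊ + 1) :=
    card_le_of_increment_bounds (c := (birkhoffSum T φ · x)) hε hδ (filter_subset _ _)
      (fun j hj m hm => by rw [birkhoffSum_add]; linarith [hlow _ (mem_filter.1 hj).2 m hm])
      (fun j hj m hm => by rw [birkhoffSum_add]; linarith [hup _ (mem_filter.1 hj).2 m hm])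
  have hN (N : ℕ) :
      N * (ε * μ.real W - δ * μ.real Set.univ) ≤ ε * (N₀ + 1) * μ.real Set.univ := by
    have h := sum_measure_le_mul_measure_univ (μ := μ)
      (fun j => hW.preimage (hT.measurable.iterate j)) (hcount N)
    simp only [(hT.iterate _).measure_preimage hW.nullMeasurableSet, sum_const, card_range,
      nsmul_eq_mul] at h
    have h' := ENNReal.toReal_mono (by finiteness) h
    simp only [ENNReal.toReal_mul, ENNReal.toReal_natCast, ← measureReal_def] at h'
    push_cast at h'
    have hfloor : ε * ⌊δ * N / ε⌋₊ ≤ δ * N := by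
      rw [← le_div_iff₀' hε]
      exact Nat.floor_le (by positivity)
    nlinarith [mul_le_mul_of_nonneg_left h' hε.le,
      mul_nonneg hε.le (measureReal_nonneg (μ := μ) (s := W)),
      mul_le_mul_of_nonneg_right hfloor (measureReal_nonneg (μ := μ) (s := Set.univ))]
  by_contra! h
  obtain ⟨N, hN'⟩ := exists_nat_gt
    (ε * (N₀ + 1) * μ.real Set.univ / (ε * μ.real W - δ * μ.real Set.univ))
  rw [div_lt_iff₀ (sub_pos.2 h)] at hN'
  exact (hN N).not_gt hN'

theorem mul_measureReal_le_of_tendsto_birkhoffAverage_zero [IsFiniteMeasure μ] {φ : X → ℝ}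
    (hT : MeasurePreserving T μ μ) (hφ : Measurable φ) {ε δ : ℝ} (hε : 0 < ε) (hδ : 0 < δ) :
    ε * μ.real {x | (∀ m, 1 ≤ m → ε ≤ birkhoffSum T φ m x) ∧
      Tendsto (birkhoffAverage ℝ T φ · x) atTop (𝓝 0)} ≤ δ * μ.real Set.univ := by
  have hSm := measurable_birkhoffSum_s1 hT.measurable hφ
  set W : ℕ → Set X := fun N₀ => {x | (∀ m, 1 ≤ m → ε ≤ birkhoffSum T φ m x) ∧
    ∀ m, N₀ ≤ m → birkhoffSum T φ m x ≤ δ * m}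
  have hWm (N₀ : ℕ) : MeasurableSet (W N₀) := by
    simp only [W, Set.ofPred_and, Set.ofPred_forall]
    exact (MeasurableSet.iInter fun m => .iInter fun _ =>
      measurableSet_le measurable_const (hSm m)).inter
      (.iInter fun m => .iInter fun _ => measurableSet_le (hSm m) measurable_const)
  have hWmono : Monotone W := fun N₁ N₂ h x hx => ⟨hx.1, fun m hm => hx.2 m (h.trans hm)⟩
  have hsubset : {x | (∀ m, 1 ≤ m → ε ≤ birkhoffSum T φ m x) ∧
      Tendsto (birkhoffAverage ℝ T φ · x) atTop (𝓝 0)} ⊆ ⋃ N₀, W N₀ := fun x hx => by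
    obtain ⟨N₀, hN₀⟩ := eventually_atTop.1 ((tendsto_order.1 hx.2).2 δ hδ)
    refine Set.mem_iUnion.2 ⟨N₀ + 1, hx.1, fun m hm => ?_⟩
    have := hN₀ m (by omega)
    rw [birkhoffAverage, smul_eq_mul, inv_mul_lt_iff₀ (Nat.cast_pos.2 (by omega))] at this
    linarith
  have hlim := ((ENNReal.tendsto_toReal (measure_ne_top μ _)).comp
    (tendsto_measure_iUnion_atTop hWmono)).const_mul ε
  calc _ ≤ ε * μ.real (⋃ N₀, W N₀) := mul_le_mul_of_nonneg_left (measureReal_mono hsubset) hε.le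
    _ ≤ δ * μ.real Set.univ := le_of_tendsto' hlim fun N₀ =>
      mul_measureReal_le_of_birkhoffSum_bounds hT (hWm N₀) hε hδ.le
        (fun x hx => hx.1) (fun x hx => hx.2)

theorem ae_not_tendsto_birkhoffAverage_zero_of_forall_le_birkhoffSum [IsFiniteMeasure μ]
    {φ : X → ℝ} (hT : MeasurePreserving T μ μ) (hφ : Measurable φ) {ε : ℝ} (hε : 0 < ε) :
    ∀ᵐ x ∂μ, (∀ m, 1 ≤ m → ε ≤ birkhoffSum T φ m x) →
      ¬Tendsto (birkhoffAverage ℝ T φ · x) atTop (𝓝 0) := by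
  simp only [ae_iff, Classical.not_imp, not_not]
  have hlim : Tendsto (fun δ : ℝ => δ * μ.real Set.univ) (𝓝[>] 0) (𝓝 0) :=
    (Continuous.tendsto' (by fun_prop) 0 0 (by simp)).mono_left nhdsWithin_le_nhds
  have hle := ge_of_tendsto hlim <| eventually_nhdsWithin_of_forall fun δ hδ =>
    mul_measureReal_le_of_tendsto_birkhoffAverage_zero hT hφ hε hδ
  rw [← measureReal_eq_zero_iff]
  exact le_antisymm (nonpos_of_mul_nonpos_right hle hε) measureReal_nonneg

theorem ae_pos_of_tendsto_birkhoffSum_atTop [IsFiniteMeasure μ] {φ : X → ℝ}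
    (hT : MeasurePreserving T μ μ) (hφ : AEMeasurable φ μ) :
    ∀ᵐ x ∂μ, Tendsto (birkhoffSum T φ · x) atTop atTop →
      ∀ l, Tendsto (birkhoffAverage ℝ T φ · x) atTop (𝓝 l) → 0 < l := by
  filter_upwards [ae_all_iff.2 fun q : ℕ => ae_all_iff.2 fun k =>
      (hT.iterate k).quasiMeasurePreserving.ae
        (ae_not_tendsto_birkhoffAverage_zero_of_forall_le_birkhoffSum hT hφ.measurable_mk
          (ε := 1 / ((q : ℝ) + 1)) (by positivity)),
    ae_all_iff.2 fun n => hT.quasiMeasurePreserving.birkhoffSum_ae_eq_of_ae_eq hφ.ae_eq_mk n]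
    with x hx hψ htop l hl
  have hA (n : ℕ) : birkhoffAverage ℝ T φ n x = birkhoffAverage ℝ T (hφ.mk φ) n x := by
    rw [birkhoffAverage, birkhoffAverage, hψ]
  simp only [hψ] at htop
  simp only [hA] at hl
  have hl0 : 0 ≤ l := ge_of_tendsto hl <| (htop.eventually_ge_atTop 0).mono fun n hn =>
    smul_nonneg (by positivity) hn
  refine hl0.lt_of_ne' fun hl0 => ?_
  subst hl0
  obtain ⟨n, ε, hε, hn⟩ := exists_iterate_forall_le_birkhoffSum htop
  obtain ⟨q, hq⟩ := exists_nat_one_div_lt hε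
  exact hx q n (fun m hm => hq.le.trans (hn m hm)) (tendsto_birkhoffAverage_iterate_apply hl n)

theorem nullMeasurableSet_setOf_tendsto_birkhoffSum_atTop {φ : X → ℝ}
    (hT : Measure.QuasiMeasurePreserving T μ μ) (hφ : AEMeasurable φ μ) :
    NullMeasurableSet {x | Tendsto (birkhoffSum T φ · x) atTop atTop} μ := by
  refine (measurableSet_tendsto (l := atTop) atTop (measurable_birkhoffSum_s1 hT.measurable
    hφ.measurable_mk)).nullMeasurableSet.congr ?_
  filter_upwards [ae_all_iff.2 fun n => hT.birkhoffSum_ae_eq_of_ae_eq hφ.ae_eq_mk n] with x hx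
  change Tendsto _ _ _ = Tendsto _ _ _
  simp only [hx]

theorem eLpNorm_birkhoffAverage_le {E : Type*} [NormedAddCommGroup E] [NormedSpace ℝ E]
    {φ : X → E} {p : ENNReal} (hT : MeasurePreserving T μ μ) (hφ : AEStronglyMeasurable φ μ)
    (hp : 1 ≤ p) (n : ℕ) :
    eLpNorm (birkhoffAverage ℝ T φ n) p μ ≤ eLpNorm φ p μ := by
  rcases eq_or_ne n 0 with rfl | hn
  · simp
  calc eLpNorm (birkhoffAverage ℝ T φ n) p μ
      = ‖(n : ℝ)⁻¹‖ₑ * eLpNorm (∑ k ∈ range n, φ ∘ T^[k]) p μ := by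
        rw [birkhoffAverage_eq_smul_sum_comp, eLpNorm_const_smul]
    _ ≤ ‖(n : ℝ)⁻¹‖ₑ * ∑ k ∈ range n, eLpNorm (φ ∘ T^[k]) p μ := by
        gcongr
        exact eLpNorm_sum_le (fun k _ => hφ.comp_measurePreserving (hT.iterate k)) hp
    _ = eLpNorm φ p μ := by
        simp only [eLpNorm_comp_measurePreserving hφ (hT.iterate _), sum_const, card_range,
          nsmul_eq_mul]
        rw [enorm_inv (by positivity), Real.enorm_natCast, ← mul_assoc,
          ENNReal.inv_mul_cancel (by simpa) (by simp), one_mul]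

theorem MemLp.of_tendsto_birkhoffAverage {E : Type*} [NormedAddCommGroup E] [NormedSpace ℝ E]
    {φ : X → E} {p : ENNReal} (hT : MeasurePreserving T μ μ) (hφ : MemLp φ p μ) (hp : 1 ≤ p)
    {g : X → E}
    (hg : ∀ᵐ x ∂μ, Tendsto (birkhoffAverage ℝ T φ · x) atTop (𝓝 (g x))) : MemLp g p μ := by
  have hmeas (n : ℕ) : AEStronglyMeasurable (birkhoffAverage ℝ T φ n) μ := by
    rw [birkhoffAverage_eq_smul_sum_comp]
    exact ((memLp_finsetSum' _ fun k _ =>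
      hφ.comp_measurePreserving (hT.iterate k)).const_smul _).1
  refine ⟨aestronglyMeasurable_of_tendsto_ae atTop hmeas hg, ?_⟩
  calc eLpNorm g p μ ≤ atTop.liminf fun n => eLpNorm (birkhoffAverage ℝ T φ n) p μ :=
        Lp.eLpNorm_lim_le_liminf_eLpNorm hmeas g hg
    _ ≤ atTop.liminf fun _ => eLpNorm φ p μ :=
        liminf_le_liminf (.of_forall (eLpNorm_birkhoffAverage_le hT hφ.1 hp))
    _ < ⊤ := by rw [liminf_const]; exact hφ.2

end Measure

/-- Corollary to Atkinson's theorem: if `T` is a measure-preserving automorphism of a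
Borel probability space `(X, μ)`, `φ` is integrable, and the set `P` of points whose
Birkhoff sums `S(n,x)` tend to `+∞` has positive measure, then the a.e.-defined
Birkhoff average `φ̂` satisfies `∫_P φ̂ dμ > 0`; in particular `φ̂ > 0` on a set of
positive measure. -/
theorem birkhoff_average_positive_of_sums_tendsto_atTop
    {X : Type*} [MeasurableSpace X] (μ : Measure X) [IsProbabilityMeasure μ]
    (T : X ≃ᵐ X) (hT : MeasurePreserving (⇑T) μ μ)
    (φ : X → ℝ) (hφ : Integrable φ μ)
    (P : Set X)
    (hP : P = {x : X | Tendsto (fun n => ∑ i ∈ Finset.range n, φ ((⇑T)^[i] x)) atTop atTop})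
    (hPpos : 0 < μ P)
    (φhat : X → ℝ)
    (hφhat : ∀ᵐ x ∂μ, Tendsto
      (fun n => (∑ i ∈ Finset.range n, φ ((⇑T)^[i] x)) / (n : ℝ)) atTop (nhds (φhat x))) :
    (0 < ∫ x in P, φhat x ∂μ) ∧ 0 < μ {x : X | 0 < φhat x} := by
  have hφhat' : ∀ᵐ x ∂μ, Tendsto (birkhoffAverage ℝ T φ · x) atTop (𝓝 (φhat x)) := by
    filter_upwards [hφhat] with x hx
    exact hx.congr fun n => by rw [birkhoffAverage, smul_eq_mul, inv_mul_eq_div]; rfl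
  have hpos : ∀ᵐ x ∂μ, x ∈ P → 0 < φhat x := by
    filter_upwards [ae_pos_of_tendsto_birkhoffSum_atTop hT hφ.aemeasurable, hφhat']
      with x hx hlim hxP
    rw [hP] at hxP
    exact hx hxP _ hlim
  have hPm : NullMeasurableSet P μ :=
    hP ▸ nullMeasurableSet_setOf_tendsto_birkhoffSum_atTop hT.quasiMeasurePreserving hφ.aemeasurable
  have hint : Integrable φhat μ := memLp_one_iff_integrable.1 <|
    MemLp.of_tendsto_birkhoffAverage hT (memLp_one_iff_integrable.2 hφ) le_rfl hφhat'
  refine ⟨?_, hPpos.trans_le (measure_mono_ae (hpos.mono fun x hx hxP => hx hxP))⟩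
  rw [setIntegral_pos_iff_support_of_nonneg_ae
    ((ae_restrict_iff'₀ hPm).2 (hpos.mono fun x hx hxP => (hx hxP).le)) hint.integrableOn]
  exact hPpos.trans_le (measure_mono_ae (hpos.mono fun x hx hxP => ⟨(hx hxP).ne', hxP⟩))
end

section
/- Let $T\colon X \to X$ be a measure-preserving automorphism of a probability space $(X,\mu)$, let $U \subset X$ have positive measure with almost every point of $U$ recurrent, and let $\phi\colon X \to \mathbb{R}$ be integrable and vanish outside $V = \bigcup_{n\ge 0}T^n(U)$. If the induced first-return sum $\phi_U(x) = \sum_{m=0}^{n(x)-1}\phi(T^m(x))$ satisfies $\phi_U(x) \ge 1$ for almost all $x \in U$, then the Birkhoff average $\hat\phi(x) = \lim_{n\to\infty}\frac1n\sum_{i=0}^{n-1}\phi(T^i(x))$ is strictly positive on a set of positive $\mu$-measure. -/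
/-!
Decompose `V` by excursions: if `A_m ⊆ U` is the set of points that do not come back to `U`
within `m` steps, the images `T^m(A_m)` are disjoint (`T` is injective) and cover `V`, while
`φ_U = ∑_m 1_{A_m} · φ ∘ T^m` at recurrent points of `U`. Integrating term by term gives Kac's
identity `∫_U φ_U = ∫_V φ = ∫ φ`, hence `∫ φ ≥ μ(U) > 0`. The Birkhoff averages of `φ` are
uniformly integrable, their summands being identically distributed, so by Vitali's theorem
`∫ φ̂ = ∫ φ > 0`, and `φ̂ > 0` on a set of positive measure.
-/

open MeasureTheory Filter Finset

open scoped ENNReal Topology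

section FirstReturn

variable {α : Type*} {f : α → α} {U : Set α} {x : α} {m : ℕ}

/-- `0` when `x` never returns to `U`. -/
noncomputable def firstReturnTime (f : α → α) (U : Set α) (x : α) : ℕ :=
  sInf {n | 0 < n ∧ f^[n] x ∈ U}

def noReturnUntil (f : α → α) (U : Set α) (m : ℕ) : Set α :=
  {x | x ∈ U ∧ ∀ i, 0 < i → i ≤ m → f^[i] x ∉ U}

lemma noReturnUntil_subset : noReturnUntil f U m ⊆ U := fun _ hx ↦ hx.1

lemma mem_noReturnUntil_iff (hx : ∃ n, 0 < n ∧ f^[n] x ∈ U) :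
    x ∈ noReturnUntil f U m ↔ x ∈ U ∧ m < firstReturnTime f U x := by
  have hτ : 0 < firstReturnTime f U x ∧ f^[firstReturnTime f U x] x ∈ U := Nat.sInf_mem hx
  refine ⟨fun ⟨hxU, hno⟩ ↦ ⟨hxU, ?_⟩, fun ⟨hxU, hm⟩ ↦ ⟨hxU, fun i hi him hiU ↦ ?_⟩⟩
  · by_contra! hle
    exact hno _ hτ.1 hle hτ.2
  · have : firstReturnTime f U x ≤ i := Nat.sInf_le ⟨hi, hiU⟩
    omega

lemma pairwise_disjoint_image_noReturnUntil (hf : Function.Injective f) :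
    Pairwise (Function.onFun Disjoint fun m ↦ f^[m] '' noReturnUntil f U m) := by
  suffices h : ∀ m l, m < l →
      Disjoint (f^[m] '' noReturnUntil f U m) (f^[l] '' noReturnUntil f U l) by
    intro m l hml
    rcases hml.lt_or_gt with hlt | hlt
    exacts [h m l hlt, (h l m hlt).symm]
  intro m l hml
  refine Set.disjoint_left.2 ?_
  rintro _ ⟨a, ha, rfl⟩ ⟨b, hb, hab⟩
  have hba : f^[l - m] b = a := by
    apply hf.iterate m
    rwa [← Function.iterate_add_apply, Nat.add_sub_cancel' hml.le]
  exact hb.2 (l - m) (by omega) (by omega) (hba ▸ ha.1)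

lemma iUnion_image_noReturnUntil :
    ⋃ m, f^[m] '' noReturnUntil f U m = ⋃ n, f^[n] '' U := by
  refine subset_antisymm (Set.iUnion_mono fun m ↦ Set.image_mono noReturnUntil_subset) ?_
  rintro _ ⟨_, ⟨n, rfl⟩, u, hu, rfl⟩
  classical
  -- `f^[k] u` is the last visit to `U` of the orbit segment `u, …, f^[n] u`
  set k := Nat.findGreatest (fun k ↦ f^[k] u ∈ U) n
  have hk : k ≤ n := Nat.findGreatest_le n
  refine Set.mem_iUnion.2 ⟨n - k, f^[k] u,
    ⟨Nat.findGreatest_spec (P := fun k ↦ f^[k] u ∈ U) (Nat.zero_le n) hu, ?_⟩, ?_⟩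
  · intro i hi hin hiU
    rw [← Function.iterate_add_apply] at hiU
    exact Nat.findGreatest_is_greatest (P := fun k ↦ f^[k] u ∈ U) (n := n) (k := i + k)
      (by omega) (by omega) hiU
  · rw [← Function.iterate_add_apply, Nat.sub_add_cancel hk]

lemma tsum_indicator_noReturnUntil (φ : α → ℝ) (hx : x ∈ U → ∃ n, 0 < n ∧ f^[n] x ∈ U) :
    ∑' m, (noReturnUntil f U m).indicator (fun y ↦ φ (f^[m] y)) x =
      U.indicator (fun y ↦ birkhoffSum f φ (firstReturnTime f U y) y) x := by
  by_cases hxU : x ∈ U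
  · have hmem (m : ℕ) : x ∈ noReturnUntil f U m ↔ m < firstReturnTime f U x := by
      simp [mem_noReturnUntil_iff (hx hxU), hxU]
    rw [Set.indicator_of_mem hxU, birkhoffSum, tsum_eq_sum (s := range (firstReturnTime f U x))]
    · exact sum_congr rfl fun m hm ↦ Set.indicator_of_mem ((hmem m).2 (mem_range.1 hm)) _
    · exact fun m hm ↦ Set.indicator_of_notMem (fun h ↦ hm (mem_range.2 ((hmem m).1 h))) _
  · simp [Set.indicator_of_notMem hxU, Set.indicator_of_notMem (noReturnUntil_subset.mt hxU)]

end FirstReturn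

section Measure

variable {α : Type*} [MeasurableSpace α] {μ : Measure α}

lemma MeasurableEmbedding.iterate {f : α → α} (hf : MeasurableEmbedding f) :
    ∀ n, MeasurableEmbedding f^[n]
  | 0 => .id
  | n + 1 => by rw [Function.iterate_succ]; exact (hf.iterate n).comp hf

lemma measurableSet_noReturnUntil {f : α → α} {U : Set α} (hf : Measurable f)
    (hU : MeasurableSet U) (m : ℕ) : MeasurableSet (noReturnUntil f U m) := by
  simp only [noReturnUntil, Set.ofPred_and, Set.ofPred_forall, Set.ofPred_mem_eq]
  exact hU.inter (.iInter fun i ↦ .iInter fun _ ↦ .iInter fun _ ↦ (hf.iterate i hU).compl)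

lemma integrable_tsum_of_summable_integral_norm {ι : Type*} [Countable ι] {F : ι → α → ℝ}
    (hF_int : ∀ i, Integrable (F i) μ) (hF_sum : Summable fun i ↦ ∫ a, ‖F i a‖ ∂μ) :
    Integrable (fun a ↦ ∑' i, F i a) μ := by
  refine ⟨(AEMeasurable.tsum fun i ↦ (hF_int i).aemeasurable).aestronglyMeasurable, ?_⟩
  calc ∫⁻ a, ‖∑' i, F i a‖ₑ ∂μ ≤ ∫⁻ a, ∑' i, ‖F i a‖ₑ ∂μ :=
        lintegral_mono fun a ↦ enorm_tsum_le_tsum_enorm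
    _ = ∑' i, ∫⁻ a, ‖F i a‖ₑ ∂μ := lintegral_tsum fun i ↦ (hF_int i).aemeasurable.enorm
    _ = ENNReal.ofReal (∑' i, ∫ a, ‖F i a‖ ∂μ) := by
        rw [ENNReal.ofReal_tsum_of_nonneg (fun i ↦ integral_nonneg fun a ↦ norm_nonneg _) hF_sum]
        simp_rw [ofReal_integral_norm_eq_lintegral_enorm (hF_int _)]
    _ < ∞ := ENNReal.ofReal_lt_top

lemma measure_setOf_pos_pos_of_integral_pos {g : α → ℝ} (h : 0 < ∫ x, g x ∂μ) :
    0 < μ {x | 0 < g x} := by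
  by_contra! h0
  have hg : ∀ᵐ x ∂μ, g x ≤ 0 := by
    simpa [ae_iff, not_le] using nonpos_iff_eq_zero.1 h0
  exact h.not_ge (integral_nonpos_of_ae hg)

namespace MeasureTheory.MeasurePreserving

lemma identDistrib_comp {β γ : Type*} [MeasurableSpace β] [MeasurableSpace γ] {ν : Measure β}
    {f : α → β} {g : β → γ} (hf : MeasurePreserving f μ ν) (hg : AEMeasurable g ν) :
    ProbabilityTheory.IdentDistrib (g ∘ f) g μ ν where
  aemeasurable_fst := hg.comp_quasiMeasurePreserving hf.quasiMeasurePreserving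
  aemeasurable_snd := hg
  map_eq := by
    rw [← AEMeasurable.map_map_of_aemeasurable (hf.map_eq ▸ hg) hf.aemeasurable, hf.map_eq]

variable {f : α → α} {φ : α → ℝ}

section Kac

variable {U : Set α}

lemma integral_indicator_noReturnUntil_comp (hf : MeasurePreserving f μ μ)
    (hfe : MeasurableEmbedding f) (hU : MeasurableSet U) (g : α → ℝ) (m : ℕ) :
    ∫ x, (noReturnUntil f U m).indicator (fun y ↦ g (f^[m] y)) x ∂μ =
      ∫ y in f^[m] '' noReturnUntil f U m, g y ∂μ := by
  rw [integral_indicator (measurableSet_noReturnUntil hfe.measurable hU m)]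
  exact ((hf.iterate m).setIntegral_image_emb (hfe.iterate m) g _).symm

lemma hasSum_integral_indicator_noReturnUntil_comp (hf : MeasurePreserving f μ μ)
    (hfe : MeasurableEmbedding f) (hU : MeasurableSet U) {g : α → ℝ}
    (hg : IntegrableOn g (⋃ n, f^[n] '' U) μ) :
    HasSum (fun m ↦ ∫ x, (noReturnUntil f U m).indicator (fun y ↦ g (f^[m] y)) x ∂μ)
      (∫ y in ⋃ n, f^[n] '' U, g y ∂μ) := by
  simp_rw [hf.integral_indicator_noReturnUntil_comp hfe hU, ← iUnion_image_noReturnUntil]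
  refine hasSum_integral_iUnion (fun m ↦ ?_) (pairwise_disjoint_image_noReturnUntil hfe.injective)
    (by rwa [iUnion_image_noReturnUntil])
  exact (hfe.iterate m).measurableSet_image.2 (measurableSet_noReturnUntil hfe.measurable hU m)

lemma integrable_indicator_noReturnUntil_comp (hf : MeasurePreserving f μ μ)
    (hfe : MeasurableEmbedding f) (hU : MeasurableSet U) (hφ : Integrable φ μ) (m : ℕ) :
    Integrable ((noReturnUntil f U m).indicator fun y ↦ φ (f^[m] y)) μ :=
  ((hf.iterate m).integrable_comp_of_integrable hφ).indicator
    (measurableSet_noReturnUntil hfe.measurable hU m)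

lemma summable_integral_norm_indicator_noReturnUntil_comp (hf : MeasurePreserving f μ μ)
    (hfe : MeasurableEmbedding f) (hU : MeasurableSet U) (hφ : Integrable φ μ) :
    Summable fun m ↦ ∫ x, ‖(noReturnUntil f U m).indicator (fun y ↦ φ (f^[m] y)) x‖ ∂μ := by
  simp_rw [norm_indicator_eq_indicator_norm]
  exact (hf.hasSum_integral_indicator_noReturnUntil_comp hfe hU hφ.norm.integrableOn).summable

lemma indicator_birkhoffSum_firstReturnTime_ae_eq_tsum (hU : MeasurableSet U)
    (hrec : ∀ᵐ x ∂μ.restrict U, ∃ n, 0 < n ∧ f^[n] x ∈ U) :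
    U.indicator (fun x ↦ birkhoffSum f φ (firstReturnTime f U x) x) =ᵐ[μ]
      fun x ↦ ∑' m, (noReturnUntil f U m).indicator (fun y ↦ φ (f^[m] y)) x := by
  filter_upwards [(ae_restrict_iff' hU).1 hrec] with x hx
  exact (tsum_indicator_noReturnUntil φ hx).symm

theorem integrableOn_birkhoffSum_firstReturnTime (hf : MeasurePreserving f μ μ)
    (hfe : MeasurableEmbedding f) (hU : MeasurableSet U)
    (hrec : ∀ᵐ x ∂μ.restrict U, ∃ n, 0 < n ∧ f^[n] x ∈ U) (hφ : Integrable φ μ) :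
    IntegrableOn (fun x ↦ birkhoffSum f φ (firstReturnTime f U x) x) U μ := by
  rw [← integrable_indicator_iff hU]
  exact (integrable_tsum_of_summable_integral_norm
    (hf.integrable_indicator_noReturnUntil_comp hfe hU hφ)
    (hf.summable_integral_norm_indicator_noReturnUntil_comp hfe hU hφ)).congr
    (indicator_birkhoffSum_firstReturnTime_ae_eq_tsum hU hrec).symm

theorem setIntegral_birkhoffSum_firstReturnTime (hf : MeasurePreserving f μ μ)
    (hfe : MeasurableEmbedding f) (hU : MeasurableSet U)
    (hrec : ∀ᵐ x ∂μ.restrict U, ∃ n, 0 < n ∧ f^[n] x ∈ U) (hφ : Integrable φ μ) :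
    ∫ x in U, birkhoffSum f φ (firstReturnTime f U x) x ∂μ = ∫ y in ⋃ n, f^[n] '' U, φ y ∂μ := by
  rw [← integral_indicator hU,
    integral_congr_ae (indicator_birkhoffSum_firstReturnTime_ae_eq_tsum hU hrec),
    ← integral_tsum_of_summable_integral_norm
      (hf.integrable_indicator_noReturnUntil_comp hfe hU hφ)
      (hf.summable_integral_norm_indicator_noReturnUntil_comp hfe hU hφ)]
  exact (hf.hasSum_integral_indicator_noReturnUntil_comp hfe hU hφ.integrableOn).tsum_eq

end Kac

section MeanOfBirkhoffLimit

lemma integral_birkhoffAverage (hf : MeasurePreserving f μ μ) (hφ : Integrable φ μ) {n : ℕ}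
    (hn : n ≠ 0) : ∫ x, birkhoffAverage ℝ f φ n x ∂μ = ∫ x, φ x ∂μ := by
  have hφn (i : ℕ) : ∫ x, φ (f^[i] x) ∂μ = ∫ x, φ x ∂μ := by
    rw [← integral_map (hf.iterate i).aemeasurable (by rw [(hf.iterate i).map_eq]; exact hφ.1),
      (hf.iterate i).map_eq]
  calc ∫ x, birkhoffAverage ℝ f φ n x ∂μ
      = (n : ℝ)⁻¹ * ∑ i ∈ range n, ∫ x, φ (f^[i] x) ∂μ := by
        simp only [birkhoffAverage, birkhoffSum, smul_eq_mul, integral_const_mul]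
        congr 1
        exact integral_finsetSum _ fun i _ ↦ (hf.iterate i).integrable_comp_of_integrable hφ
    _ = ∫ x, φ x ∂μ := by simp [hφn, hn]

variable [IsFiniteMeasure μ]

lemma uniformIntegrable_birkhoffAverage (hf : MeasurePreserving f μ μ) (hφ : Integrable φ μ) :
    UniformIntegrable (birkhoffAverage ℝ f φ) 1 μ := by
  have hUI : UniformIntegrable (fun i ↦ φ ∘ f^[i]) 1 μ :=
    ProbabilityTheory.MemLp.uniformIntegrable_of_identDistrib (j := 0) le_rfl ENNReal.one_ne_top
      (memLp_one_iff_integrable.2 hφ) fun i ↦ (hf.iterate i).identDistrib_comp hφ.aemeasurable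
  convert uniformIntegrable_average le_rfl hUI using 2 with n
  ext x
  simp [birkhoffAverage, birkhoffSum]

theorem integral_eq_of_tendsto_birkhoffAverage (hf : MeasurePreserving f μ μ)
    (hφ : Integrable φ μ) {φhat : α → ℝ}
    (hlim : ∀ᵐ x ∂μ, Tendsto (birkhoffAverage ℝ f φ · x) atTop (𝓝 (φhat x))) :
    ∫ x, φhat x ∂μ = ∫ x, φ x ∂μ := by
  have hUI := hf.uniformIntegrable_birkhoffAverage hφ
  have hL1 : Tendsto (fun n ↦ eLpNorm (birkhoffAverage ℝ f φ n - φhat) 1 μ) atTop (𝓝 0) :=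
    tendsto_Lp_finite_of_tendsto_ae le_rfl ENNReal.one_ne_top hUI.1
      (hUI.memLp_of_ae_tendsto hlim) hUI.2.1 hlim
  have hint : Tendsto (fun n ↦ ∫ x, birkhoffAverage ℝ f φ n x ∂μ) atTop
      (𝓝 (∫ x, φhat x ∂μ)) :=
    tendsto_integral_of_L1' _ (hUI.integrable_of_ae_tendsto hlim).1
      (.of_forall fun n ↦ memLp_one_iff_integrable.1 (hUI.memLp n)) hL1
  refine tendsto_nhds_unique hint (tendsto_const_nhds.congr' ?_)
  filter_upwards [eventually_ne_atTop 0] with n hn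
  exact (hf.integral_birkhoffAverage hφ hn).symm

end MeanOfBirkhoffLimit

end MeasureTheory.MeasurePreserving

end Measure

/-- If `T` is a measure-preserving automorphism of a probability space, `U` has
positive measure with almost every point of `U` recurrent, `φ` is integrable and
vanishes outside `V = ⋃_{n ≥ 0} Tⁿ(U)`, and the first-return sum of `φ` on `U` is at
least `1` almost everywhere on `U`, then the Birkhoff average `φ̂` of `φ` is strictly
positive on a set of positive measure. -/
theorem birkhoff_average_positive_of_return_sums
    {X : Type*} [MeasurableSpace X] (μ : Measure X) [IsProbabilityMeasure μ]
    (T : X ≃ᵐ X) (hT : MeasurePreserving (⇑T) μ μ)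
    (U : Set X) (hUm : MeasurableSet U) (hUpos : 0 < μ U)
    (hrec : ∀ᵐ x ∂(μ.restrict U), ∃ n : ℕ, 0 < n ∧ (⇑T)^[n] x ∈ U)
    (φ : X → ℝ) (hφ : Integrable φ μ)
    (hvanish : ∀ x, x ∉ (⋃ n : ℕ, (⇑T)^[n] '' U) → φ x = 0)
    (hreturn : ∀ᵐ x ∂(μ.restrict U),
      (1 : ℝ) ≤ ∑ m ∈ Finset.range (sInf {n : ℕ | 0 < n ∧ (⇑T)^[n] x ∈ U}),
        φ ((⇑T)^[m] x))
    (φhat : X → ℝ)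
    (hφhat : ∀ᵐ x ∂μ, Tendsto
      (fun n : ℕ => (∑ i ∈ Finset.range n, φ ((⇑T)^[i] x)) / (n : ℝ))
      atTop (nhds (φhat x))) :
    0 < μ {x : X | 0 < φhat x} := by
  have hmean : ∫ x, φhat x ∂μ = ∫ x, φ x ∂μ :=
    hT.integral_eq_of_tendsto_birkhoffAverage hφ <| by
      simpa only [birkhoffAverage, birkhoffSum, smul_eq_mul, inv_mul_eq_div] using hφhat
  have hKac : ∫ x in U, birkhoffSum T φ (firstReturnTime T U x) x ∂μ = ∫ x, φ x ∂μ := by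
    rw [hT.setIntegral_birkhoffSum_firstReturnTime T.measurableEmbedding hUm hrec hφ,
      setIntegral_eq_integral_of_forall_compl_eq_zero hvanish]
  have hlow : μ.real U ≤ ∫ x in U, birkhoffSum T φ (firstReturnTime T U x) x ∂μ := by
    simpa using setIntegral_mono_ae_restrict (integrableOn_const (measure_ne_top μ U))
      (hT.integrableOn_birkhoffSum_firstReturnTime T.measurableEmbedding hUm hrec hφ) hreturn
  refine measure_setOf_pos_pos_of_integral_pos ?_
  rw [hmean, ← hKac]
  exact (ENNReal.toReal_pos hUpos.ne' (measure_ne_top μ U)).trans_le hlow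
end
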